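/- arXiv:2402.15413 — 2 statements merged into one kernel-verified Lean document; each statement's English description precedes it below -/
import Mathlib

section
/- A function h from n-tuples of vectors in ℝ^d to ℝ^d is O(d)-equivariant (i.e. h (g • X) = g.mulVec (h X) for all g in O(d) and all tuples X) if and only if there exist functions f_t (for t ∈ Fin n) from n×n real matrices to ℝ such that h X = ∑ t, f_t (Gram X) • (X t) for every tuple X. -/
open Matrix

/-- The Gram matrix of a tuple of vectors: entries are pairwise Euclidean inner products. -/
def Gram {d n : ℕ} (X : Fin n → (Fin d → ℝ)) : Matrix (Fin n) (Fin n) ℝ :=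
  Matrix.of fun i j => ∑ k, X i k * X j k

/-!
Orthogonal maps preserve Gram matrices, which gives the easy direction. Conversely, the
reflection in the span of the inputs `X` is orthogonal and fixes every `X i`, so by
equivariance it fixes `h X`, which therefore lies in that span. Two tuples with the same Gram
matrix are related by an orthogonal map (the isometry `∑ c i • X i ↦ ∑ c i • Y i` between
their spans, extended to the whole space), so coefficients chosen for one representative tuple
per Gram matrix transport, by equivariance, to every tuple with that Gram matrix.
-/

section

variable {𝕜 E ι : Type*} [RCLike 𝕜] [NormedAddCommGroup E] [InnerProductSpace 𝕜 E] [Fintype ι]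

theorem inner_linearCombination_eq_of_inner_eq {v w : ι → E}
    (h : ∀ i j, inner 𝕜 (v i) (v j) = inner 𝕜 (w i) (w j)) (c c' : ι → 𝕜) :
    inner 𝕜 (Fintype.linearCombination 𝕜 v c) (Fintype.linearCombination 𝕜 v c') =
      inner 𝕜 (Fintype.linearCombination 𝕜 w c) (Fintype.linearCombination 𝕜 w c') := by
  simp [Fintype.linearCombination_apply, sum_inner, inner_sum, inner_smul_left,
    inner_smul_right, h]

theorem exists_linearIsometry_apply_eq_of_inner_eq [FiniteDimensional 𝕜 E] {v w : ι → E}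
    (h : ∀ i j, inner 𝕜 (v i) (v j) = inner 𝕜 (w i) (w j)) :
    ∃ L : E →ₗᵢ[𝕜] E, ∀ i, L (v i) = w i := by
  classical
  set T := Fintype.linearCombination 𝕜 v
  set T' := Fintype.linearCombination 𝕜 w
  have hinner := inner_linearCombination_eq_of_inner_eq h
  have hker : LinearMap.ker T ≤ LinearMap.ker T' := fun c hc => by
    rw [LinearMap.mem_ker] at hc ⊢
    have := hinner c c
    rwa [hc, inner_zero_left, eq_comm, inner_self_eq_zero] at this
  let φ := (LinearMap.ker T).liftQ T' hker ∘ₗ T.quotKerEquivRange.symm.toLinearMap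
  have hφ (c : ι → 𝕜) : φ ⟨T c, LinearMap.mem_range_self T c⟩ = T' c := by
    simp [φ, LinearMap.quotKerEquivRange_symm_apply_image]
  have hφ_inner : ∀ x y, inner 𝕜 (φ x) (φ y) = inner 𝕜 x y := by
    rintro ⟨_, c, rfl⟩ ⟨_, c', rfl⟩
    rw [hφ, hφ, Submodule.coe_inner]
    exact (hinner c c').symm
  let L : LinearMap.range T →ₗᵢ[𝕜] E := ⟨φ, (LinearMap.norm_map_iff_inner_map_map φ).2 hφ_inner⟩
  refine ⟨L.extend, fun i => ?_⟩
  have hvi : v i = T (Pi.single i 1) := by simp [T]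
  rw [hvi, L.extend_apply ⟨_, LinearMap.mem_range_self T _⟩]
  exact (hφ _).trans (by simp [T'])
end

namespace Matrix

variable {m R : Type*} [Fintype m]

theorem mulVec_dotProduct_mulVec [CommSemiring R] (g : Matrix m m R) (x y : m → R) :
    g *ᵥ x ⬝ᵥ g *ᵥ y = x ⬝ᵥ (gᵀ * g) *ᵥ y := by
  rw [← vecMul_transpose, ← dotProduct_mulVec, mulVec_mulVec]

theorem transpose_mul_self_eq_one_iff [CommSemiring R] [DecidableEq m] {g : Matrix m m R} :
    gᵀ * g = 1 ↔ ∀ x y, g *ᵥ x ⬝ᵥ g *ᵥ y = x ⬝ᵥ y := by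
  simp only [mulVec_dotProduct_mulVec]
  refine ⟨fun hg x y => by rw [hg, one_mulVec], fun hg => mulVec_injective ?_⟩
  funext y
  rw [one_mulVec]
  exact dotProduct_eq _ _ fun x => by rw [dotProduct_comm, hg, dotProduct_comm]

end Matrix

theorem LinearIsometry.exists_transpose_mul_self_eq_one_mulVec_eq {m : Type*} [Fintype m]
    [DecidableEq m] (L : EuclideanSpace ℝ m →ₗᵢ[ℝ] EuclideanSpace ℝ m) :
    ∃ g : Matrix m m ℝ, gᵀ * g = 1 ∧ ∀ x, g *ᵥ x = (L (WithLp.toLp 2 x)).ofLp := by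
  let g := (Matrix.toLpLin 2 2).symm L.toLinearMap
  have hg (x : m → ℝ) : g *ᵥ x = (L (WithLp.toLp 2 x)).ofLp :=
    congrArg (fun f => (f (WithLp.toLp 2 x)).ofLp)
      ((Matrix.toLpLin 2 2).apply_symm_apply L.toLinearMap)
  refine ⟨g, Matrix.transpose_mul_self_eq_one_iff.2 fun x y => ?_, hg⟩
  have := L.inner_map_map (WithLp.toLp 2 y) (WithLp.toLp 2 x)
  rw [EuclideanSpace.inner_eq_star_dotProduct, EuclideanSpace.inner_toLp_toLp] at this
  simpa [hg] using this

theorem gram_apply {d n : ℕ} (X : Fin n → (Fin d → ℝ)) (i j : Fin n) :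
    Gram X i j = X i ⬝ᵥ X j := rfl

theorem gram_mulVec {d n : ℕ} {g : Matrix (Fin d) (Fin d) ℝ} (hg : gᵀ * g = 1)
    (X : Fin n → (Fin d → ℝ)) : Gram (fun i => g *ᵥ X i) = Gram X := by
  ext i j
  exact transpose_mul_self_eq_one_iff.1 hg _ _

theorem exists_transpose_mul_self_eq_one_of_gram_eq {d n : ℕ} {X Y : Fin n → (Fin d → ℝ)}
    (hXY : Gram X = Gram Y) :
    ∃ g : Matrix (Fin d) (Fin d) ℝ, gᵀ * g = 1 ∧ ∀ i, g *ᵥ X i = Y i := by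
  have hinner (i j : Fin n) : inner ℝ (WithLp.toLp 2 (X i)) (WithLp.toLp 2 (X j)) =
      inner ℝ (WithLp.toLp 2 (Y i)) (WithLp.toLp 2 (Y j)) := by
    simpa [EuclideanSpace.inner_toLp_toLp, gram_apply, dotProduct_comm] using
      congr_fun₂ hXY i j
  obtain ⟨L, hL⟩ := exists_linearIsometry_apply_eq_of_inner_eq hinner
  obtain ⟨g, hg, hgL⟩ := L.exists_transpose_mul_self_eq_one_mulVec_eq
  exact ⟨g, hg, fun i => by rw [hgL, hL]⟩

theorem mem_span_range_of_equivariant {ι m : Type*} [Fintype m] [DecidableEq m]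
    {h : (ι → m → ℝ) → m → ℝ}
    (hh : ∀ g : Matrix m m ℝ, gᵀ * g = 1 → ∀ X : ι → m → ℝ, h (fun i => g *ᵥ X i) = g *ᵥ h X)
    (X : ι → m → ℝ) : h X ∈ Submodule.span ℝ (Set.range X) := by
  let e := (WithLp.linearEquiv 2 ℝ (m → ℝ)).symm
  let K := (Submodule.span ℝ (Set.range X)).map (e : (m → ℝ) →ₗ[ℝ] WithLp 2 (m → ℝ))
  obtain ⟨g, hg, hgK⟩ :=
    K.reflection.toLinearIsometry.exists_transpose_mul_self_eq_one_mulVec_eq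
  have hfix : (fun i => g *ᵥ X i) = X := funext fun i => by
    rw [hgK]
    exact congrArg WithLp.ofLp (K.reflection_mem_subspace_eq_self
      (Submodule.mem_map_of_mem (Submodule.subset_span ⟨i, rfl⟩)))
  have hrefl : K.reflection (e (h X)) = e (h X) := by
    apply WithLp.ofLp_injective
    rw [← LinearIsometryEquiv.coe_toLinearIsometry, ← hgK]
    exact (hh g hg X).symm.trans (congrArg h hfix)
  rw [Submodule.reflection_eq_self_iff, Submodule.mem_map_equiv] at hrefl
  simpa using hrefl

theorem equivariant_iff_scalar_combination_of_inputs (d n : ℕ)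
    (h : (Fin n → (Fin d → ℝ)) → (Fin d → ℝ)) :
    (∀ g : Matrix (Fin d) (Fin d) ℝ, gᵀ * g = 1 →
      ∀ X : Fin n → (Fin d → ℝ), h (fun i => g.mulVec (X i)) = g.mulVec (h X)) ↔
    (∃ f : Fin n → (Matrix (Fin n) (Fin n) ℝ → ℝ),
      ∀ X : Fin n → (Fin d → ℝ), h X = ∑ t, f t (Gram X) • X t) := by
  constructor
  · intro hh
    choose c hc using fun X =>
      (Submodule.mem_span_range_iff_exists_fun ℝ).1 (mem_span_range_of_equivariant hh X)
    refine ⟨fun t G => c (Classical.epsilon fun Y => Gram Y = G) t, fun X => ?_⟩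
    set Y := Classical.epsilon fun Y => Gram Y = Gram X
    have hY : Gram Y = Gram X := Classical.epsilon_spec (p := fun Y => Gram Y = Gram X) ⟨X, rfl⟩
    obtain ⟨g, hg, hgY⟩ := exists_transpose_mul_self_eq_one_of_gram_eq hY
    calc h X = h (fun i => g *ᵥ Y i) := by simp only [hgY]
      _ = g *ᵥ h Y := hh g hg Y
      _ = ∑ t, c Y t • X t := by simp only [← hc Y, mulVec_sum, mulVec_smul, hgY]
  · rintro ⟨f, hf⟩ g hg X
    simp only [hf, gram_mulVec hg, mulVec_sum, mulVec_smul]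
end

section
/- Let G be a finite group with group homomorphisms ρX from G to O(n) and ρY from G to O(m), let K ⊆ (Fin n → ℝ) be compact and G-invariant ((ρX g).mulVec x ∈ K whenever x ∈ K), let h : (Fin n → ℝ) → (Fin m → ℝ) be continuous and G-equivariant (h ((ρX g).mulVec x) = (ρY g).mulVec (h x) for all g ∈ G, x), and let ε > 0. Then there exists a polynomial map p : (Fin n → ℝ) → (Fin m → ℝ) (each coordinate given by a real polynomial in the n input coordinates) such that for all x ∈ K, the Euclidean norm of (|G| : ℝ)⁻¹ • ∑ g ∈ G, (ρY g).mulVec (p ((ρX g)⁻¹.mulVec x)) - h x is less than ε. -/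
/-!
Approximate `h` on `K` coordinatewise by polynomials (Stone–Weierstrass), getting a polynomial
map `p` with `‖p y - h y‖ < ε` for all `y ∈ K`. By equivariance, the `g`-th term of the
symmetrization minus `h x` is `ρY g` applied to `p y - h y` with `y = (ρX g)⁻¹ x ∈ K`, so it has
norm `< ε` because `ρY g` is orthogonal; the average of points of the open `ε`-ball around `h x`
stays in that convex ball.
-/

open Matrix

/-- The Euclidean norm of a vector in `Fin m → ℝ`. -/
noncomputable def euclNorm {m : ℕ} (v : Fin m → ℝ) : ℝ :=
  Real.sqrt (∑ k, (v k) ^ 2)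

namespace MvPolynomial

variable {σ : Type*}

noncomputable def toContinuousMapOnAlgHom (K : Set (σ → ℝ)) :
    MvPolynomial σ ℝ →ₐ[ℝ] C(K, ℝ) :=
  aeval fun i => ⟨fun x => x.1 i, (continuous_apply i).comp continuous_subtype_val⟩

@[simp]
lemma toContinuousMapOnAlgHom_apply (K : Set (σ → ℝ)) (q : MvPolynomial σ ℝ) (x : K) :
    toContinuousMapOnAlgHom K q x = eval x.1 q := by
  change ContinuousMap.evalAlgHom ℝ ℝ x (aeval _ q) = _
  rw [comp_aeval_apply]
  rfl

lemma toContinuousMapOnAlgHom_range_separatesPoints (K : Set (σ → ℝ)) :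
    (toContinuousMapOnAlgHom K).range.SeparatesPoints := by
  intro x y hxy
  obtain ⟨i, hi⟩ : ∃ i, x.1 i ≠ y.1 i := by
    by_contra! hcon
    exact hxy (Subtype.ext (_root_.funext hcon))
  exact ⟨_, ⟨_, ⟨X i, rfl⟩, rfl⟩, by simpa using hi⟩

theorem exists_forall_abs_eval_sub_lt {K : Set (σ → ℝ)} (hK : IsCompact K)
    {f : (σ → ℝ) → ℝ} (hf : ContinuousOn f K) {δ : ℝ} (hδ : 0 < δ) :
    ∃ q : MvPolynomial σ ℝ, ∀ x ∈ K, |eval x q - f x| < δ := by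
  have : CompactSpace K := isCompact_iff_compactSpace.mp hK
  obtain ⟨⟨_, q, rfl⟩, hq⟩ :=
    ContinuousMap.exists_mem_subalgebra_near_continuous_of_separatesPoints _
      (toContinuousMapOnAlgHom_range_separatesPoints K) (K.domRestrict f) hf.domRestrict δ hδ
  exact ⟨q, fun x hx => by simpa [Set.domRestrict] using hq ⟨x, hx⟩⟩

end MvPolynomial

open MvPolynomial

lemma Matrix.UnitaryGroup.inv_val_eq_nonsing_inv {ι α : Type*} [Fintype ι] [DecidableEq ι]
    [CommRing α] [StarRing α] (A : unitaryGroup ι α) :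
    ((A⁻¹ : unitaryGroup ι α) : Matrix ι ι α) = (A : Matrix ι ι α)⁻¹ :=
  (inv_eq_left_inv (UnitaryGroup.star_mul_self A)).symm

lemma euclNorm_eq_norm_toLp {m : ℕ} (v : Fin m → ℝ) : euclNorm v = ‖WithLp.toLp 2 v‖ := by
  simp [euclNorm, EuclideanSpace.norm_eq]

lemma euclNorm_le_sum_abs {m : ℕ} (v : Fin m → ℝ) : euclNorm v ≤ ∑ k, |v k| := by
  calc euclNorm v = Real.sqrt (∑ k, |v k| ^ 2) := by simp [euclNorm]
    _ ≤ Real.sqrt ((∑ k, |v k|) ^ 2) :=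
      Real.sqrt_le_sqrt (Finset.sum_sq_le_sq_sum_of_nonneg fun k _ => abs_nonneg (v k))
    _ = ∑ k, |v k| := Real.sqrt_sq (Finset.sum_nonneg fun k _ => abs_nonneg (v k))

lemma euclNorm_mulVec_of_mem_orthogonalGroup {m : ℕ} {A : Matrix (Fin m) (Fin m) ℝ}
    (hA : A ∈ orthogonalGroup (Fin m) ℝ) (v : Fin m → ℝ) : euclNorm (A *ᵥ v) = euclNorm v := by
  have hsq : ∀ w : Fin m → ℝ, ∑ k, w k ^ 2 = w ⬝ᵥ w := fun w => by simp [dotProduct, sq]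
  rw [euclNorm, euclNorm, hsq, hsq, dotProduct_mulVec, ← mulVec_transpose, mulVec_mulVec,
    (mem_orthogonalGroup_iff' _ _).mp hA, one_mulVec]

lemma euclNorm_inv_card_smul_sum_sub_lt {m : ℕ} {ι : Type*} [Fintype ι] [Nonempty ι]
    {v : ι → Fin m → ℝ} {w : Fin m → ℝ} {ε : ℝ} (hv : ∀ i, euclNorm (v i - w) < ε) :
    euclNorm ((Fintype.card ι : ℝ)⁻¹ • ∑ i, v i - w) < ε := by
  have hmem := (convex_ball (WithLp.toLp 2 w) ε).sum_mem (t := Finset.univ)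
    (w := fun _ => (Fintype.card ι : ℝ)⁻¹) (z := fun i => WithLp.toLp 2 (v i))
    (fun _ _ => by positivity) (by simp) (fun i _ => by
      simpa [dist_eq_norm, euclNorm_eq_norm_toLp] using hv i)
  simpa [dist_eq_norm, euclNorm_eq_norm_toLp, Finset.smul_sum] using hmem

theorem exists_mvPolynomial_euclNorm_sub_lt {σ : Type*} {m : ℕ} {K : Set (σ → ℝ)}
    (hK : IsCompact K) {h : (σ → ℝ) → (Fin m → ℝ)} (hc : ContinuousOn h K) {δ : ℝ} (hδ : 0 < δ) :
    ∃ p : Fin m → MvPolynomial σ ℝ,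
      ∀ x ∈ K, euclNorm ((fun a => eval x (p a)) - h x) < δ := by
  have hη : 0 < δ / (m + 1) := by positivity
  choose p hp using fun k : Fin m => exists_forall_abs_eval_sub_lt hK
    ((continuous_apply k).comp_continuousOn hc) hη
  refine ⟨p, fun x hx => ?_⟩
  calc euclNorm ((fun a => eval x (p a)) - h x)
      ≤ ∑ k, |eval x (p k) - h x k| := euclNorm_le_sum_abs _
    _ ≤ ∑ _k : Fin m, δ / (m + 1) := Finset.sum_le_sum fun k _ => (hp k x hx).le
    _ = m * (δ / (m + 1)) := by simp
    _ < δ := by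
      rw [mul_div_assoc', div_lt_iff₀ (by positivity)]
      linarith

theorem symmetrized_polynomial_approximation (n m : ℕ)
    (G : Type*) [Group G] [Fintype G]
    (ρX : G →* Matrix.orthogonalGroup (Fin n) ℝ)
    (ρY : G →* Matrix.orthogonalGroup (Fin m) ℝ)
    (K : Set (Fin n → ℝ)) (hK : IsCompact K)
    (hKinv : ∀ (g : G), ∀ x ∈ K, (ρX g : Matrix (Fin n) (Fin n) ℝ).mulVec x ∈ K)
    (h : (Fin n → ℝ) → (Fin m → ℝ)) (hc : Continuous h)
    (hequiv : ∀ (g : G) (x : Fin n → ℝ),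
      h ((ρX g : Matrix (Fin n) (Fin n) ℝ).mulVec x) =
        (ρY g : Matrix (Fin m) (Fin m) ℝ).mulVec (h x))
    (ε : ℝ) (hε : 0 < ε) :
    ∃ p : Fin m → MvPolynomial (Fin n) ℝ,
      ∀ x ∈ K,
        euclNorm ((Fintype.card G : ℝ)⁻¹ •
          (∑ g : G, ((ρY g : Matrix (Fin m) (Fin m) ℝ)).mulVec
            (fun a => MvPolynomial.eval
              (((ρX g)⁻¹ : Matrix (Fin n) (Fin n) ℝ).mulVec x) (p a))) - h x) < ε := by
  obtain ⟨p, hp⟩ := exists_mvPolynomial_euclNorm_sub_lt hK hc.continuousOn hε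
  refine ⟨p, fun x hx => euclNorm_inv_card_smul_sum_sub_lt fun g => ?_⟩
  rw [← UnitaryGroup.inv_val_eq_nonsing_inv, ← map_inv]
  set y := ((ρX g⁻¹ : orthogonalGroup (Fin n) ℝ) : Matrix (Fin n) (Fin n) ℝ) *ᵥ x
  have hx_eq : (ρX g : Matrix (Fin n) (Fin n) ℝ) *ᵥ y = x := by
    simp [y, mulVec_mulVec]
  rw [← hx_eq, hequiv, ← mulVec_sub, euclNorm_mulVec_of_mem_orthogonalGroup (ρY g).2]
  exact hp y (hKinv g⁻¹ x hx)
end
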